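/- For computable ordinals α < β, E_min(α) is strictly below E_min(β) under computable reducibility: E_min(α) ≤_c E_min(β) but E_min(β) is not computably reducible to E_min(α). -/

import Mathlib

/-- The `e`-th computably enumerable set of natural numbers. -/
def Wce (e : ℕ) : Set ℕ :=
  {x | ((Denumerable.ofNat Nat.Partrec.Code e).eval x).Dom}


/-- A computable well-ordering of ℕ. -/
structure CompWO where
  r : ℕ → ℕ → Bool
  comp : Computable₂ r
  wo : IsWellOrder ℕ (fun a b => r a b = true)

/-- `m` is the `A`-least element of `S`. -/
def IsMinOf (A : CompWO) (S : Set ℕ) (m : ℕ) : Prop :=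
  m ∈ S ∧ ∀ x ∈ S, A.r x m = false

/-- The equivalence relation `E_min(A)` on indices of c.e. sets. -/
def Emin (A : CompWO) (e i : ℕ) : Prop :=
  (Wce e = ∅ ∧ Wce i = ∅) ∨ ∃ m, IsMinOf A (Wce e) m ∧ IsMinOf A (Wce i) m

/-- Computable reducibility of binary relations on ℕ. -/
def CompReducible (E F : ℕ → ℕ → Prop) : Prop :=
  ∃ h : ℕ → ℕ, Computable h ∧ ∀ x y, E x y ↔ F (h x) (h y)

/-- The order type of a computable well-ordering. -/
noncomputable def CompWO.otype (A : CompWO) : Ordinal :=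
  @Ordinal.type ℕ (fun a b => A.r a b = true) A.wo

/-- The `A`-rank of an element. -/
noncomputable def CompWO.rank (A : CompWO) (a : ℕ) : Ordinal :=
  @Ordinal.typein ℕ (fun a b => A.r a b = true) A.wo a

/-- The ordinal below ω^ω coded by a list of Cantor normal form coefficients
[c₀, c₁, ..., c_k] ↦ ω^k·c_k + ... + ω·c₁ + c₀. -/
noncomputable def cnfVal (l : List ℕ) : Ordinal :=
  ((l.mapIdx fun (i : ℕ) (c : ℕ) => Ordinal.omega0 ^ i * (c : Ordinal)).reverse).sum

/-- A "strongly computable" well-ordering of ℕ of type at most ω^ω: a computable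
well-ordering together with a computable function giving, for each element, the
Cantor normal form coefficients of its rank. This is the canonical setting in which
E_min(α) is defined. -/
structure StrongCompWO extends CompWO where
  rk : ℕ → List ℕ
  rk_comp : Computable rk
  rk_rank : ∀ a, cnfVal (rk a) = toCompWO.rank a


/-!
Ranks below ω^ω are written in Cantor normal form, and equality of two normal forms is decidable,
so for `α ≤ β` one can computably match elements of `A` with elements of `B` of the same rank.
Replacing `W_e` by the c.e. set of `B`-elements whose rank is the `A`-rank of an element of `W_e`
keeps the set of ranks, hence the least rank, and so reduces `E_min(α)` to `E_min(β)`.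

Conversely, let `h` reduce `E_min(β)` to `E_min(α)`. By the recursion theorem the class of `{b}`
is sent to a class of nonempty sets, with `A`-least element `g b`, and `g` is strictly monotone:
for `n <_B m`, a set `W_e = {m}` that enumerates `n` as soon as `g m` appears in `W_{h e}` forces
`g n <_A g m`. Thus `β ≤ α`.
-/

open Nat.Partrec (Code)
open Nat.Partrec.Code
open Ordinal (omega0)

attribute [local instance] CompWO.wo

theorem Ordinal.eq_of_mul_add_eq_mul_add {b c c' r r' : Ordinal} (hr : r < b) (hr' : r' < b)
    (h : b * c + r = b * c' + r') : c = c' ∧ r = r' := by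
  have hb : b ≠ 0 := hr.ne_bot
  constructor
  · simpa [Ordinal.mul_add_div _ hb, Ordinal.div_eq_zero_of_lt hr,
      Ordinal.div_eq_zero_of_lt hr'] using congrArg (· / b) h
  · simpa [Ordinal.mul_add_mod_self, Ordinal.mod_eq_of_lt hr, Ordinal.mod_eq_of_lt hr']
      using congrArg (· % b) h

theorem Primrec.list_replicate {α : Type*} [Primcodable α] :
    Primrec₂ (List.replicate : ℕ → α → List α) := by
  have : Primrec₂ fun (n : ℕ) (a : α) => (List.range n).map fun _ => a :=
    Primrec.list_map (Primrec.list_range.comp Primrec.fst) (Primrec.snd.comp Primrec.fst).to₂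
  exact this.of_eq fun n a => by rw [List.map_const', List.length_range]

theorem cnfVal_append_singleton (l : List ℕ) (c : ℕ) :
    cnfVal (l ++ [c]) = omega0 ^ l.length * c + cnfVal l := by
  simp [cnfVal]

theorem cnfVal_append_replicate_zero (l : List ℕ) (k : ℕ) :
    cnfVal (l ++ List.replicate k 0) = cnfVal l := by
  induction k with
  | zero => simp
  | succ k ih => rw [List.replicate_succ', ← List.append_assoc, cnfVal_append_singleton,
      Nat.cast_zero, mul_zero, zero_add, ih]

theorem cnfVal_lt_omega0_pow (l : List ℕ) : cnfVal l < omega0 ^ l.length := by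
  induction l using List.reverseRecOn with
  | nil => simp [cnfVal]
  | append_singleton l c ih =>
    rw [cnfVal_append_singleton, List.length_append, List.length_singleton]
    calc omega0 ^ l.length * c + cnfVal l
        < omega0 ^ l.length * c + omega0 ^ l.length := add_lt_add_right ih _
      _ = omega0 ^ l.length * (c + 1) := by rw [mul_add, mul_one]
      _ ≤ omega0 ^ (l.length + 1) := by
          rw [pow_succ]
          exact mul_le_mul_right (Ordinal.natCast_lt_omega0 (c + 1)).le _

theorem eq_of_cnfVal_eq_of_length_eq {l l' : List ℕ} (hl : l.length = l'.length)
    (h : cnfVal l = cnfVal l') : l = l' := by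
  induction l using List.reverseRecOn generalizing l' with
  | nil => exact (List.eq_nil_of_length_eq_zero hl.symm).symm
  | append_singleton l c ih =>
    induction l' using List.reverseRecOn with
    | nil => simp at hl
    | append_singleton l' c' _ =>
      simp only [List.length_append, List.length_singleton, Nat.add_right_cancel_iff] at hl
      rw [cnfVal_append_singleton, cnfVal_append_singleton, ← hl] at h
      obtain ⟨hc, hv⟩ := Ordinal.eq_of_mul_add_eq_mul_add (cnfVal_lt_omega0_pow l)
        (hl ▸ cnfVal_lt_omega0_pow l') h
      rw [ih hl hv, Nat.cast_injective hc]

def cnfEq (l l' : List ℕ) : Bool :=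
  decide (l ++ List.replicate (l'.length - l.length) 0 =
    l' ++ List.replicate (l.length - l'.length) 0)

theorem cnfEq_iff {l l' : List ℕ} : cnfEq l l' = true ↔ cnfVal l = cnfVal l' := by
  rw [cnfEq, decide_eq_true_iff]
  refine ⟨fun h => ?_, fun h => eq_of_cnfVal_eq_of_length_eq ?_ ?_⟩
  · simpa only [cnfVal_append_replicate_zero] using congrArg cnfVal h
  · simp only [List.length_append, List.length_replicate]; omega
  · simpa only [cnfVal_append_replicate_zero] using h

theorem primrec₂_cnfEq : Primrec₂ cnfEq := by
  have pad : Primrec₂ fun l l' : List ℕ => l ++ List.replicate (l'.length - l.length) 0 :=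
    Primrec.list_append.comp Primrec.fst (Primrec.list_replicate.comp
      (Primrec.nat_sub.comp (Primrec.list_length.comp Primrec.snd)
        (Primrec.list_length.comp Primrec.fst)) (Primrec.const 0))
  exact (Primrec.eq.comp pad (pad.comp Primrec.snd Primrec.fst)).decide

theorem exists_computable_Wce_eq_dom {f : ℕ → ℕ →. ℕ} (hf : Partrec₂ f) :
    ∃ g : ℕ → ℕ, Computable g ∧ ∀ e x, x ∈ Wce (g e) ↔ (f e x).Dom := by
  obtain ⟨c, hc⟩ := exists_code.1 (Partrec.nat_iff.1
    (hf.comp (Computable.fst.comp Computable.unpair) (Computable.snd.comp Computable.unpair)))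
  refine ⟨fun e => Encodable.encode (c.curry e),
    (Primrec.encode.comp (primrec₂_curry.comp (Primrec.const c) Primrec.id)).to_comp,
    fun e x => ?_⟩
  simp [Wce, eval_curry, hc]

theorem Wce_fixed_point {f : ℕ → ℕ →. ℕ} (hf : Partrec₂ f) :
    ∃ e, ∀ x, x ∈ Wce e ↔ (f e x).Dom := by
  obtain ⟨g, hg, hgf⟩ := exists_computable_Wce_eq_dom hf
  obtain ⟨c, hc⟩ := fixed_point ((Computable.ofNat Code).comp (hg.comp Computable.encode))
  refine ⟨Encodable.encode c, fun x => ?_⟩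
  rw [← hgf]
  simp [Wce, hc]

theorem exists_Wce_eq_singleton (m : ℕ) : ∃ i, Wce i = {m} := by
  have hf : Partrec₂ fun (m x : ℕ) => cond (decide (x = m)) (Part.some 0) Part.none :=
    Partrec.cond (Primrec.eq.comp Primrec.snd Primrec.fst).decide.to_comp
      (Partrec.const' _) Partrec.none
  obtain ⟨g, -, hg⟩ := exists_computable_Wce_eq_dom hf
  refine ⟨g m, Set.ext fun x => ?_⟩
  by_cases hx : x = m <;> simp [hg, hx]

theorem exists_partrec_dom_iff_Wce_nonempty :
    ∃ f : ℕ →. ℕ, Partrec f ∧ ∀ e, (f e).Dom ↔ (Wce e).Nonempty := by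
  refine ⟨fun e => Nat.rfindOpt fun n => evaln n.unpair.2 (Denumerable.ofNat Code e) n.unpair.1,
    Partrec.rfindOpt (primrec_evaln.to_comp.comp
      (((Computable.snd.comp Computable.unpair).comp Computable.snd).pair
        ((Computable.ofNat Code).comp Computable.fst) |>.pair
        ((Computable.fst.comp Computable.unpair).comp Computable.snd))),
    fun e => ?_⟩
  rw [Nat.rfindOpt_dom]
  simp only [Set.Nonempty, Wce, Set.mem_ofPred_eq, Part.dom_iff_mem, evaln_complete]
  constructor
  · rintro ⟨n, y, hy⟩
    exact ⟨n.unpair.1, y, n.unpair.2, hy⟩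
  · rintro ⟨x, y, s, hy⟩
    exact ⟨Nat.pair x s, y, by simpa using hy⟩

namespace CompWO
variable (A : CompWO)

theorem rank_lt_rank_iff {a b : ℕ} : A.rank a < A.rank b ↔ A.r a b = true :=
  Ordinal.typein_lt_typein _

theorem rank_injective : Function.Injective A.rank :=
  Ordinal.typein_injective _

theorem rank_lt_otype (a : ℕ) : A.rank a < A.otype :=
  Ordinal.typein_lt_type _ a

theorem exists_rank_eq {o : Ordinal} (h : o < A.otype) : ∃ a, A.rank a = o :=
  (Ordinal.mem_range_typein_iff _).2 h

variable {A}

theorem isMinOf_iff {S : Set ℕ} {m : ℕ} :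
    IsMinOf A S m ↔ m ∈ S ∧ ∀ x ∈ S, A.rank m ≤ A.rank x := by
  simp only [IsMinOf, ← not_lt, rank_lt_rank_iff, Bool.not_eq_true]

theorem isMinOf_iff_rank_eq_sInf {S : Set ℕ} {m : ℕ} :
    IsMinOf A S m ↔ m ∈ S ∧ A.rank m = sInf (A.rank '' S) := by
  rw [isMinOf_iff]
  refine and_congr_right fun hm => ⟨fun hle => ?_, fun heq x hx => ?_⟩
  · exact (IsLeast.csInf_eq ⟨Set.mem_image_of_mem _ hm, Set.forall_mem_image.2 hle⟩).symm
  · exact heq ▸ csInf_le' (Set.mem_image_of_mem _ hx)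

theorem exists_isMinOf {S : Set ℕ} (hS : S.Nonempty) : ∃ m, IsMinOf A S m := by
  obtain ⟨m, hm, hrank⟩ := csInf_mem (hS.image A.rank)
  exact ⟨m, isMinOf_iff_rank_eq_sInf.2 ⟨hm, hrank⟩⟩

theorem emin_iff {e i : ℕ} :
    Emin A e i ↔ ((Wce e).Nonempty ↔ (Wce i).Nonempty) ∧
      sInf (A.rank '' Wce e) = sInf (A.rank '' Wce i) := by
  constructor
  · rintro (⟨he, hi⟩ | ⟨m, hme, hmi⟩)
    · simp [he, hi]
    · rw [isMinOf_iff_rank_eq_sInf] at hme hmi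
      exact ⟨iff_of_true ⟨m, hme.1⟩ ⟨m, hmi.1⟩, hme.2.symm.trans hmi.2⟩
  · rintro ⟨hne, hinf⟩
    by_cases he : (Wce e).Nonempty
    · obtain ⟨m, hme, hm⟩ := csInf_mem (he.image A.rank)
      obtain ⟨m', hmi, hm'⟩ := csInf_mem ((hne.1 he).image A.rank)
      obtain rfl : m = m' := A.rank_injective (hm.trans (hinf.trans hm'.symm))
      exact Or.inr ⟨m, isMinOf_iff_rank_eq_sInf.2 ⟨hme, hm⟩,
        isMinOf_iff_rank_eq_sInf.2 ⟨hmi, hm.trans hinf⟩⟩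
    · exact Or.inl ⟨Set.not_nonempty_iff_eq_empty.1 he,
        Set.not_nonempty_iff_eq_empty.1 (mt hne.2 he)⟩

theorem emin_iff_emin_of_rank_image_eq {B : CompWO} {e i e' i' : ℕ}
    (he : A.rank '' Wce e = B.rank '' Wce e') (hi : A.rank '' Wce i = B.rank '' Wce i') :
    Emin A e i ↔ Emin B e' i' := by
  rw [emin_iff, emin_iff, ← Set.image_nonempty (f := A.rank) (s := Wce e),
    ← Set.image_nonempty (f := A.rank) (s := Wce i),
    ← Set.image_nonempty (f := B.rank) (s := Wce e'),
    ← Set.image_nonempty (f := B.rank) (s := Wce i'), he, hi]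

theorem rank_image_eq_of_mem_iff {B : CompWO} (hle : A.otype ≤ B.otype) {S T : Set ℕ}
    (hT : ∀ x, x ∈ T ↔ ∃ a ∈ S, A.rank a = B.rank x) : B.rank '' T = A.rank '' S := by
  ext o
  constructor
  · rintro ⟨x, hx, rfl⟩
    obtain ⟨a, ha, hax⟩ := (hT x).1 hx
    exact ⟨a, ha, hax⟩
  · rintro ⟨a, ha, rfl⟩
    obtain ⟨x, hx⟩ := B.exists_rank_eq ((A.rank_lt_otype a).trans_le hle)
    exact ⟨x, (hT x).2 ⟨a, ha, hx.symm⟩, hx⟩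

theorem _root_.IsMinOf.unique {S : Set ℕ} {m m' : ℕ} (h : IsMinOf A S m)
    (h' : IsMinOf A S m') : m = m' := by
  rw [isMinOf_iff] at h h'
  exact A.rank_injective ((h.2 m' h'.1).antisymm (h'.2 m h.1))

theorem isMinOf_singleton (m : ℕ) : IsMinOf A {m} m := by
  simp [isMinOf_iff]

theorem emin_iff_isMinOf {e i a : ℕ} (hi : IsMinOf A (Wce i) a) :
    Emin A e i ↔ IsMinOf A (Wce e) a := by
  constructor
  · rintro (⟨-, hi'⟩ | ⟨m, hme, hmi⟩)
    · exact absurd (hi' ▸ hi.1) (Set.notMem_empty a)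
    · exact IsMinOf.unique hmi hi ▸ hme
  · exact fun he => Or.inr ⟨a, he, hi⟩

theorem emin_iff_eq_empty {e i : ℕ} (hi : Wce i = ∅) : Emin A e i ↔ Wce e = ∅ := by
  constructor
  · rintro (⟨he, -⟩ | ⟨m, -, hmi⟩)
    · exact he
    · exact absurd (hi ▸ hmi.1) (Set.notMem_empty m)
  · exact fun he => Or.inl ⟨he, hi⟩

end CompWO

namespace StrongCompWO
variable (A B : StrongCompWO)

def rankMatch (x : ℕ) : Part ℕ :=
  Nat.rfind fun a => Part.some (cnfEq (A.rk a) (B.rk x))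

theorem cnfEq_rk_iff {a x : ℕ} : cnfEq (A.rk a) (B.rk x) = true ↔ A.rank a = B.rank x := by
  rw [cnfEq_iff, A.rk_rank, B.rk_rank]

theorem mem_rankMatch_iff {x a : ℕ} : a ∈ rankMatch A B x ↔ A.rank a = B.rank x := by
  have hspec : ∀ {a}, a ∈ rankMatch A B x → A.rank a = B.rank x := fun ha => by
    simpa [cnfEq_rk_iff] using Nat.rfind_spec ha
  refine ⟨hspec, fun ha => ?_⟩
  have hdom : (rankMatch A B x).Dom :=
    Nat.rfind_dom'.2 ⟨a, by simpa [cnfEq_rk_iff] using ha, fun _ => trivial⟩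
  obtain rfl : (rankMatch A B x).get hdom = a :=
    A.rank_injective ((hspec (Part.get_mem hdom)).trans ha.symm)
  exact Part.get_mem hdom

theorem partrec_rankMatch : Partrec (rankMatch A B) :=
  Partrec.rfind (Computable₂.partrec₂ (primrec₂_cnfEq.to_comp.comp
    (A.rk_comp.comp Computable.snd) (B.rk_comp.comp Computable.fst)))

theorem exists_computable_rank_image_eq (hle : A.otype ≤ B.otype) :
    ∃ h : ℕ → ℕ, Computable h ∧ ∀ e, B.rank '' Wce (h e) = A.rank '' Wce e := by
  have hf : Partrec₂ fun e x =>
      (rankMatch A B x).bind fun a => eval (Denumerable.ofNat Code e) a :=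
    ((partrec_rankMatch A B).comp Computable.snd).bind
      (eval_part.comp ((Computable.ofNat Code).comp (Computable.fst.comp Computable.fst))
        Computable.snd)
  obtain ⟨h, hh, hmem⟩ := exists_computable_Wce_eq_dom hf
  refine ⟨h, hh, fun e => CompWO.rank_image_eq_of_mem_iff hle fun x => ?_⟩
  simp only [hmem, Part.dom_iff_mem, Part.mem_bind_iff, mem_rankMatch_iff]
  constructor
  · rintro ⟨y, a, ha, hy⟩
    exact ⟨a, Part.dom_iff_mem.2 ⟨y, hy⟩, ha⟩
  · rintro ⟨a, hae, ha⟩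
    obtain ⟨y, hy⟩ := Part.dom_iff_mem.1 hae
    exact ⟨y, a, ha, hy⟩

theorem compReducible_emin (hle : A.otype ≤ B.otype) :
    CompReducible (Emin A.toCompWO) (Emin B.toCompWO) := by
  obtain ⟨h, hh, himage⟩ := exists_computable_rank_image_eq A B hle
  exact ⟨h, hh, fun e i =>
    CompWO.emin_iff_emin_of_rank_image_eq (himage e).symm (himage i).symm⟩

end StrongCompWO

section Reduction
variable {A B : CompWO} {h : ℕ → ℕ}

theorem nonempty_Wce_of_reduction (hh : Computable h)
    (hred : ∀ x y, Emin B x y ↔ Emin A (h x) (h y)) {i b : ℕ} (hi : Wce i = {b}) :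
    (Wce (h i)).Nonempty := by
  by_contra hempty
  rw [Set.not_nonempty_iff_eq_empty] at hempty
  have hmin_iff : ∀ x, IsMinOf B (Wce x) b ↔ Wce (h x) = ∅ := fun x => by
    rw [← CompWO.emin_iff_isMinOf (hi ▸ CompWO.isMinOf_singleton b), hred,
      CompWO.emin_iff_eq_empty hempty]
  obtain ⟨f, hf, hfdom⟩ := exists_partrec_dom_iff_Wce_nonempty
  -- `W_e = {b}` if `W_{h e}` is nonempty, and `W_e = ∅` otherwise
  obtain ⟨e, he⟩ := Wce_fixed_point (f := fun e x => cond (decide (x = b)) (f (h e)) Part.none)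
    (Partrec.cond (Primrec.eq.comp Primrec.snd (Primrec.const b)).decide.to_comp
      (hf.comp (hh.comp Computable.fst)) Partrec.none)
  have hmem : ∀ x, x ∈ Wce e ↔ x = b ∧ (Wce (h e)).Nonempty := fun x => by
    by_cases hx : x = b <;> simp [he, hx, hfdom]
  have hmin_iff' : IsMinOf B (Wce e) b ↔ (Wce (h e)).Nonempty := by
    refine ⟨fun hmin => ((hmem b).1 hmin.1).2, fun hne => ?_⟩
    rw [show Wce e = {b} from Set.ext fun x => by simp [hmem, hne]]
    exact CompWO.isMinOf_singleton b
  rw [hmin_iff, ← Set.not_nonempty_iff_eq_empty] at hmin_iff'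
  exact iff_not_self hmin_iff'.symm

theorem exists_isMinOf_iff_of_reduction (hh : Computable h)
    (hred : ∀ x y, Emin B x y ↔ Emin A (h x) (h y)) (b : ℕ) :
    ∃ a, ∀ x, IsMinOf B (Wce x) b ↔ IsMinOf A (Wce (h x)) a := by
  obtain ⟨i, hi⟩ := exists_Wce_eq_singleton b
  obtain ⟨a, ha⟩ := A.exists_isMinOf (nonempty_Wce_of_reduction hh hred hi)
  refine ⟨a, fun x => ?_⟩
  rw [← CompWO.emin_iff_isMinOf (hi ▸ CompWO.isMinOf_singleton b), hred,
    CompWO.emin_iff_isMinOf ha]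

theorem rank_lt_rank_of_reduction (hh : Computable h) {g : ℕ → ℕ}
    (hg : ∀ b x, IsMinOf B (Wce x) b ↔ IsMinOf A (Wce (h x)) (g b)) {m n : ℕ}
    (hnm : B.rank n < B.rank m) : A.rank (g n) < A.rank (g m) := by
  have hne : n ≠ m := fun heq => hnm.ne (congrArg B.rank heq)
  -- `W_e = {m}`, to which `n` is added once `g m` shows up in `W_{h e}`
  obtain ⟨e, he⟩ := Wce_fixed_point (f := fun e x => cond (decide (x = m)) (Part.some 0)
    (cond (decide (x = n)) (eval (Denumerable.ofNat Code (h e)) (g m)) Part.none))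
    (Partrec.cond (Primrec.eq.comp Primrec.snd (Primrec.const m)).decide.to_comp
      (Partrec.const' _)
      (Partrec.cond (Primrec.eq.comp Primrec.snd (Primrec.const n)).decide.to_comp
        (eval_part.comp ((Computable.ofNat Code).comp (hh.comp Computable.fst))
          (Computable.const (g m)))
        Partrec.none))
  have hmem : ∀ x, x ∈ Wce e ↔ x = m ∨ x = n ∧ g m ∈ Wce (h e) := fun x => by
    rw [he]
    by_cases hxm : x = m
    · simp [hxm]
    · by_cases hxn : x = n <;> simp [hxm, hxn, hne, Wce]
  by_cases hgm : g m ∈ Wce (h e)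
  · have hmin : IsMinOf B (Wce e) n := by
      refine CompWO.isMinOf_iff.2 ⟨(hmem n).2 (Or.inr ⟨rfl, hgm⟩), fun x hx => ?_⟩
      rcases (hmem x).1 hx with rfl | ⟨rfl, -⟩
      exacts [hnm.le, le_rfl]
    have hle : A.rank (g n) ≤ A.rank (g m) := (CompWO.isMinOf_iff.1 ((hg n e).1 hmin)).2 _ hgm
    refine hle.lt_of_ne fun heq => hne ?_
    obtain ⟨i, hi⟩ := exists_Wce_eq_singleton m
    have hmin_i : IsMinOf B (Wce i) n :=
      (hg n i).2 (A.rank_injective heq ▸ (hg m i).1 (hi ▸ CompWO.isMinOf_singleton m))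
    simpa [hi] using hmin_i.1
  · have hWe : Wce e = {m} := Set.ext fun x => by simp [hmem, hgm]
    exact absurd ((hg m e).1 (hWe ▸ CompWO.isMinOf_singleton m)).1 hgm

theorem CompWO.otype_le_of_compReducible_emin (hred : CompReducible (Emin B) (Emin A)) :
    B.otype ≤ A.otype := by
  obtain ⟨h, hh, hiff⟩ := hred
  choose g hg using exists_isMinOf_iff_of_reduction hh hiff
  exact (RelEmbedding.ofMonotone g fun n m hnm => A.rank_lt_rank_iff.1
    (rank_lt_rank_of_reduction hh hg (B.rank_lt_rank_iff.2 hnm))).ordinal_type_le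

end Reduction

/-- For (strongly computable presentations of) ordinals α < β, E_min(α) is strictly
below E_min(β): E_min(α) reduces to E_min(β) but not conversely. -/
theorem stmt9 (A B : StrongCompWO) (h : A.toCompWO.otype < B.toCompWO.otype) :
    CompReducible (Emin A.toCompWO) (Emin B.toCompWO) ∧
    ¬ CompReducible (Emin B.toCompWO) (Emin A.toCompWO) :=
  ⟨A.compReducible_emin B h.le,
    fun hred => (CompWO.otype_le_of_compReducible_emin hred).not_gt h⟩
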